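/- Let G be a finite group and χ the character of an irreducible complex representation of G of dimension d. Then for all w ∈ G: Σ_{x ∈ G} Σ_{y ∈ G} χ([x,y] · w) = (|G| / d)^2 · χ(w), where [x,y] = x y x^{-1} y^{-1}. -/

import Mathlib

open CategoryTheory
open scoped commutatorElement

/-! Write `⁅x, y⁆ * w = (x * y * x⁻¹) * (y⁻¹ * w)`. By Schur's lemma a `G`-equivariant endomorphism
`S` of the simple `V` is a scalar, hence `d * tr (S * ρ u) = tr S * χ u`. For `S = ∑ x, ρ (x y x⁻¹)`
this turns the sum over `x` into `|G| χ(y) χ(y⁻¹ w) / d`; for `S = ∑ y, χ(y) • ρ (y⁻¹)`, whose trace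
is `|G|` by the orthonormality of irreducible characters, it turns the remaining convolution
`∑ y, χ(y) χ(y⁻¹ w)` into `|G| χ(w) / d`. -/

namespace FDRep

variable {k G : Type} [Field k] [Group G]

theorem character_one_ne_zero [CharZero k] (V : FDRep k G) [Simple V] : V.character 1 ≠ 0 := by
  rw [char_one, Nat.cast_ne_zero, Ne, Module.finrank_zero_iff]
  intro h
  exact id_nonzero V (by ext v; exact Subsingleton.elim _ _)

variable [IsAlgClosed k]

theorem exists_eq_smul_one_of_commute (V : FDRep k G) [Simple V] (S : Module.End k V)
    (hS : ∀ g, Commute S (V.ρ g)) : ∃ c : k, S = c • 1 := by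
  let T : V ⟶ V := ⟨FGModuleCat.ofHom S, fun g => by ext v; exact LinearMap.congr_fun (hS g) v⟩
  obtain ⟨c, hc⟩ := endomorphism_simple_eq_smul_id k T
  exact ⟨c, by ext v; exact (congrArg (fun f : V ⟶ V => f.hom.hom.hom v) hc).symm⟩

theorem character_one_mul_trace_mul_eq_of_commute (V : FDRep k G) [Simple V]
    (S : Module.End k V) (hS : ∀ g, Commute S (V.ρ g)) (u : G) :
    V.character 1 * LinearMap.trace k V (S * V.ρ u) = LinearMap.trace k V S * V.character u := by
  obtain ⟨c, rfl⟩ := exists_eq_smul_one_of_commute V S hS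
  simp only [smul_mul_assoc, one_mul, map_smul, smul_eq_mul, character, map_one]
  ring

variable [Fintype G]

theorem character_one_mul_sum_character_conj_mul (V : FDRep k G) [Simple V] (g u : G) :
    V.character 1 * ∑ x : G, V.character (x * g * x⁻¹ * u) =
      Fintype.card G * V.character g * V.character u := by
  have hS : ∀ h, Commute (∑ x : G, V.ρ (x * g * x⁻¹)) (V.ρ h) := by
    intro h
    rw [Commute, SemiconjBy, Finset.sum_mul, Finset.mul_sum,
      ← Equiv.sum_comp (Equiv.mulLeft h) (fun x => V.ρ (x * g * x⁻¹) * V.ρ h)]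
    refine Finset.sum_congr rfl fun x _ => ?_
    simp only [Equiv.coe_mulLeft, ← map_mul]
    congr 1
    group
  have htrace :
      LinearMap.trace k V (∑ x : G, V.ρ (x * g * x⁻¹)) = Fintype.card G * V.character g := by
    rw [map_sum]
    change ∑ x, V.character (x * g * x⁻¹) = _
    simp only [char_conj, Finset.sum_const, Finset.card_univ, nsmul_eq_mul]
  have := character_one_mul_trace_mul_eq_of_commute V _ hS u
  rw [htrace, Finset.sum_mul, map_sum] at this
  simp only [← map_mul] at this
  exact this

theorem character_one_mul_sum_character_mul_character_inv_mul [Invertible (Nat.card G : k)]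
    (V : FDRep k G) [Simple V] (w : G) :
    V.character 1 * ∑ y : G, V.character y * V.character (y⁻¹ * w) =
      Fintype.card G * V.character w := by
  have hS : ∀ h, Commute (∑ y : G, V.character y • V.ρ y⁻¹) (V.ρ h) := by
    intro h
    rw [Commute, SemiconjBy, Finset.sum_mul, Finset.mul_sum,
      ← Equiv.sum_comp (MulAut.conj h).toEquiv (fun y => V.character y • V.ρ y⁻¹ * V.ρ h)]
    refine Finset.sum_congr rfl fun y _ => ?_
    simp only [MulEquiv.toEquiv_eq_coe, EquivLike.coe_coe, MulAut.conj_apply, char_conj,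
      smul_mul_assoc, mul_smul_comm, ← map_mul]
    congr 2
    group
  have htrace : LinearMap.trace k V (∑ y : G, V.character y • V.ρ y⁻¹) = Fintype.card G := by
    have := char_orthonormal V V
    rw [if_pos ⟨Iso.refl V⟩, inv_mul_eq_one₀ (Invertible.ne_zero _),
      Nat.card_eq_fintype_card] at this
    simp only [map_sum, map_smul, smul_eq_mul]
    exact this.symm
  have := character_one_mul_trace_mul_eq_of_commute V _ hS w
  rw [htrace, Finset.sum_mul, map_sum] at this
  simp only [smul_mul_assoc, map_smul, ← map_mul, smul_eq_mul] at this
  exact this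

end FDRep

/-- Commutator character relation: for an irreducible complex character χ of a finite group G
with dimension d = χ(e), we have Σ_{x,y ∈ G} χ([x,y] w) = (|G|/d)² χ(w). -/
theorem character_commutator_sum {G : Type} [Group G] [Fintype G]
    (V : FDRep ℂ G) (hV : Simple V) (w : G) :
    ∑ x : G, ∑ y : G, V.character (⁅x, y⁆ * w) =
      ((Fintype.card G : ℂ) / V.character 1) ^ 2 * V.character w := by
  have hcomm (x y : G) : ⁅x, y⁆ * w = x * y * x⁻¹ * (y⁻¹ * w) := by
    simp only [commutatorElement_def, mul_assoc]
  rw [div_pow, div_mul_eq_mul_div, eq_div_iff (pow_ne_zero 2 (FDRep.character_one_ne_zero V)),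
    mul_comm]
  calc V.character 1 ^ 2 * ∑ x, ∑ y, V.character (⁅x, y⁆ * w)
      = V.character 1 * ∑ y, V.character 1 * ∑ x, V.character (x * y * x⁻¹ * (y⁻¹ * w)) := by
        simp only [hcomm]
        rw [sq, mul_assoc, Finset.sum_comm, Finset.mul_sum]
    _ = V.character 1 * ∑ y, Fintype.card G * V.character y * V.character (y⁻¹ * w) := by
        simp only [FDRep.character_one_mul_sum_character_conj_mul]
    _ = Fintype.card G * (V.character 1 * ∑ y, V.character y * V.character (y⁻¹ * w)) := by
        simp only [Finset.mul_sum, mul_assoc, mul_left_comm]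
    _ = Fintype.card G ^ 2 * V.character w := by
        rw [FDRep.character_one_mul_sum_character_mul_character_inv_mul]
        ring
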